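/- Strong Number Avoidance Theorem: Let G be a short game that is not equivalent to any number, and let x be a number. Then G + x is equivalent to the game whose left options are exactly the games G^L + x (for G^L ranging over the left options of G) and whose right options are exactly the games G^R + x (for G^R ranging over the right options of G). -/

import Mathlib

universe u

namespace SetTheory

/-- Pre-games, as in the older Mathlib (`SetTheory.PGame`, removed since). -/
inductive PGame : Type (u + 1)
  | mk : ∀ α β : Type u, (α → PGame) → (β → PGame) → PGame

namespace PGame

def LeftMoves : PGame → Type u
  | mk l _ _ _ => l

def RightMoves : PGame → Type u
  | mk _ r _ _ => r

def moveLeft : ∀ g : PGame, LeftMoves g → PGame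
  | mk _l _ L _ => L

def moveRight : ∀ g : PGame, RightMoves g → PGame
  | mk _ _r _ R => R

/-- `(leLF x y).1` is `x ≤ y` and `(leLF x y).2` is `x ⧏ y`, as in the older Mathlib. -/
noncomputable def leLF (x : PGame.{u}) : PGame.{u} → Prop × Prop :=
  PGame.rec (motive := fun _ => PGame.{u} → Prop × Prop)
    (fun _xl _xr _xL _xR IHxl IHxr y =>
      PGame.rec (motive := fun _ => Prop × Prop)
        (fun yl yr yL yR IHyl IHyr =>
          ((∀ i, (IHxl i (mk yl yr yL yR)).2) ∧ ∀ j, (IHyr j).2,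
           (∃ i, (IHyl i).1) ∨ ∃ j, (IHxr j (mk yl yr yL yR)).1)) y) x

noncomputable instance : LE PGame.{u} := ⟨fun x y => (leLF x y).1⟩

noncomputable instance : LT PGame.{u} := ⟨fun x y => x ≤ y ∧ ¬ y ≤ x⟩

def Equiv (x y : PGame.{u}) : Prop := x ≤ y ∧ y ≤ x

instance : HasEquiv PGame.{u} := ⟨Equiv⟩

def Numeric : PGame.{u} → Prop
  | mk _ _ L R => (∀ i j, L i < R j) ∧ (∀ i, Numeric (L i)) ∧ ∀ j, Numeric (R j)

class inductive Short : PGame.{u} → Type (u + 1)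
  | mk :
    ∀ {α β : Type u} {L : α → PGame.{u}} {R : β → PGame.{u}} (_ : ∀ i : α, Short (L i))
      (_ : ∀ j : β, Short (R j)) [Fintype α] [Fintype β], Short ⟨α, β, L, R⟩

noncomputable instance : Add PGame.{u} :=
  ⟨fun x => PGame.rec (motive := fun _ => PGame.{u} → PGame.{u})
    (fun xl xr _xL _xR IHxl IHxr y =>
      PGame.rec (motive := fun _ => PGame.{u})
        (fun yl yr yL yR IHyl IHyr =>
          mk (xl ⊕ yl) (xr ⊕ yr)
            (Sum.rec (fun i => IHxl i (mk yl yr yL yR)) IHyl)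
            (Sum.rec (fun i => IHxr i (mk yl yr yL yR)) IHyr)) y) x⟩

end PGame

end SetTheory

open SetTheory PGame

/-!
Write `L(G)` and `R(G)` for the left and right stops of a short game. Either every `R(G^L)` lies
below every `L(G^R)`, and then `G` is a number, or `L(G) = max R(G^L)` and `R(G) = min L(G^R)`.
So when `G` is not a number some `G^L` has `R(G^L) = L(G)`, and for numbers `a < c < b` we get
`G + a ≤ L(G) + c ≤ G^L + b`: a move in `G` gains more than any positive number. In `G + x`,
Left's move to `G + x^L` is therefore dominated by some `G^L + x`, and Right's move to `G + x^R`
by some `G^R + x`, which is the claimed equivalence.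
-/

namespace SetTheory

namespace PGame

def LF (x y : PGame.{u}) : Prop := (leLF x y).2

infix:50 " ⧏ " => LF

theorem mk_le_mk {xl xr : Type u} {xL : xl → PGame.{u}} {xR : xr → PGame.{u}}
    {yl yr : Type u} {yL : yl → PGame.{u}} {yR : yr → PGame.{u}} :
    mk xl xr xL xR ≤ mk yl yr yL yR ↔
      (∀ i, xL i ⧏ mk yl yr yL yR) ∧ ∀ j, mk xl xr xL xR ⧏ yR j := Iff.rfl

theorem mk_lf_mk {xl xr : Type u} {xL : xl → PGame.{u}} {xR : xr → PGame.{u}}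
    {yl yr : Type u} {yL : yl → PGame.{u}} {yR : yr → PGame.{u}} :
    mk xl xr xL xR ⧏ mk yl yr yL yR ↔
      (∃ i, mk xl xr xL xR ≤ yL i) ∨ ∃ j, xR j ≤ mk yl yr yL yR := Iff.rfl

theorem le_iff_forall_lf {x y : PGame.{u}} :
    x ≤ y ↔ (∀ i, x.moveLeft i ⧏ y) ∧ ∀ j, x ⧏ y.moveRight j := by
  cases x; cases y; exact mk_le_mk

theorem lf_iff_exists_le {x y : PGame.{u}} :
    x ⧏ y ↔ (∃ i, x ≤ y.moveLeft i) ∨ ∃ j, x.moveRight j ≤ y := by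
  cases x; cases y; exact mk_lf_mk

theorem not_le_and_not_lf (x y : PGame.{u}) : (¬ x ≤ y ↔ y ⧏ x) ∧ (¬ x ⧏ y ↔ y ≤ x) := by
  induction x generalizing y with
  | mk xl xr xL xR ihxl ihxr =>
  induction y with
  | mk yl yr yL yR ihyl ihyr =>
  have h₁ : ∀ i z, ¬ xL i ⧏ z ↔ z ≤ xL i := fun i z => (ihxl i z).2
  have h₂ : ∀ j, ¬ mk xl xr xL xR ⧏ yR j ↔ yR j ≤ mk xl xr xL xR := fun j => (ihyr j).2
  have h₃ : ∀ i, ¬ mk xl xr xL xR ≤ yL i ↔ yL i ⧏ mk xl xr xL xR := fun i => (ihyl i).1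
  have h₄ : ∀ j z, ¬ xR j ≤ z ↔ z ⧏ xR j := fun j z => (ihxr j z).1
  rw [mk_le_mk, mk_le_mk, mk_lf_mk, mk_lf_mk]
  constructor
  · simp only [not_and_or, not_forall, h₁, h₂]
  · simp only [not_or, not_exists, h₃, h₄]

theorem not_le {x y : PGame.{u}} : ¬ x ≤ y ↔ y ⧏ x := (not_le_and_not_lf x y).1

theorem not_lf {x y : PGame.{u}} : ¬ x ⧏ y ↔ y ≤ x := (not_le_and_not_lf x y).2

theorem lf_of_le_moveLeft {x y : PGame.{u}} {i : y.LeftMoves} (h : x ≤ y.moveLeft i) : x ⧏ y :=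
  lf_iff_exists_le.2 (Or.inl ⟨i, h⟩)

theorem lf_of_moveRight_le {x y : PGame.{u}} {j : x.RightMoves} (h : x.moveRight j ≤ y) : x ⧏ y :=
  lf_iff_exists_le.2 (Or.inr ⟨j, h⟩)

theorem moveLeft_lf_of_le {x y : PGame.{u}} (h : x ≤ y) (i : x.LeftMoves) : x.moveLeft i ⧏ y :=
  (le_iff_forall_lf.1 h).1 i

theorem lf_moveRight_of_le {x y : PGame.{u}} (h : x ≤ y) (j : y.RightMoves) :
    x ⧏ y.moveRight j :=
  (le_iff_forall_lf.1 h).2 j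

theorem le_of_forall {x y : PGame.{u}} (hl : ∀ i, ∃ i', x.moveLeft i ≤ y.moveLeft i')
    (hr : ∀ j, ∃ j', x.moveRight j' ≤ y.moveRight j) : x ≤ y :=
  le_iff_forall_lf.2 ⟨fun i => let ⟨_, h⟩ := hl i; lf_of_le_moveLeft h,
    fun j => let ⟨_, h⟩ := hr j; lf_of_moveRight_le h⟩

theorem le_trans_aux (x y z : PGame.{u}) :
    (x ≤ y → y ≤ z → x ≤ z) ∧ (y ≤ z → z ≤ x → y ≤ x) ∧ (z ≤ x → x ≤ y → z ≤ y) := by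
  induction x generalizing y z with
  | mk xl xr xL xR ihx₁ ihx₂ =>
  induction y generalizing z with
  | mk yl yr yL yR ihy₁ ihy₂ =>
  induction z with
  | mk zl zr zL zR ihz₁ ihz₂ =>
  refine ⟨fun h₁ h₂ => ?_, fun h₁ h₂ => ?_, fun h₁ h₂ => ?_⟩ <;>
    refine le_iff_forall_lf.2 ⟨fun i => not_le.1 fun h => ?_, fun j => not_le.1 fun h => ?_⟩
  · exact not_lf.2 ((ihx₁ i _ _).2.1 h₂ h) (moveLeft_lf_of_le h₁ i)
  · exact not_lf.2 ((ihz₂ j).2.2 h h₁) (lf_moveRight_of_le h₂ j)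
  · exact not_lf.2 ((ihy₁ i _).2.2 h₂ h) (moveLeft_lf_of_le h₁ i)
  · exact not_lf.2 ((ihx₂ j _ _).1 h h₁) (lf_moveRight_of_le h₂ j)
  · exact not_lf.2 ((ihz₁ i).1 h₂ h) (moveLeft_lf_of_le h₁ i)
  · exact not_lf.2 ((ihy₂ j _).2.1 h h₁) (lf_moveRight_of_le h₂ j)

noncomputable instance : Preorder PGame.{u} where
  le_refl x := by
    induction x with
    | mk xl xr xL xR ihl ihr =>
    exact le_iff_forall_lf.2 ⟨fun i => lf_of_le_moveLeft (ihl i),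
      fun j => lf_of_moveRight_le (ihr j)⟩
  le_trans x y z := (le_trans_aux x y z).1
  lt_iff_le_not_ge _ _ := Iff.rfl

theorem lf_of_lt {x y : PGame.{u}} (h : x < y) : x ⧏ y := not_le.1 h.2

theorem moveLeft_lf {x : PGame.{u}} (i : x.LeftMoves) : x.moveLeft i ⧏ x :=
  lf_of_le_moveLeft le_rfl

theorem lf_moveRight {x : PGame.{u}} (j : x.RightMoves) : x ⧏ x.moveRight j :=
  lf_of_moveRight_le le_rfl

noncomputable instance setoid : Setoid PGame.{u} :=
  ⟨Equiv, ⟨fun _ => ⟨le_rfl, le_rfl⟩, fun h => ⟨h.2, h.1⟩,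
    fun h₁ h₂ => ⟨h₁.1.trans h₂.1, h₂.2.trans h₁.2⟩⟩⟩

instance : Zero PGame.{u} := ⟨mk PEmpty PEmpty PEmpty.elim PEmpty.elim⟩

def neg : PGame.{u} → PGame.{u}
  | mk l r L R => mk r l (fun j => neg (R j)) (fun i => neg (L i))

instance : Neg PGame.{u} := ⟨neg⟩

instance fintypeLeftMoves : ∀ (x : PGame.{u}) [Short x], Fintype x.LeftMoves
  | _, @Short.mk _ _ _ _ _ _ F _ => F

instance fintypeRightMoves : ∀ (x : PGame.{u}) [Short x], Fintype x.RightMoves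
  | _, @Short.mk _ _ _ _ _ _ _ F => F

instance moveLeftShort : ∀ (x : PGame.{u}) [Short x] (i : x.LeftMoves), Short (x.moveLeft i)
  | _, @Short.mk _ _ _ _ sL _ _ _, i => sL i

instance moveRightShort : ∀ (x : PGame.{u}) [Short x] (j : x.RightMoves), Short (x.moveRight j)
  | _, @Short.mk _ _ _ _ _ sR _ _, j => sR j

section Numeric

theorem Numeric.mk {x : PGame.{u}} (h₁ : ∀ i j, x.moveLeft i < x.moveRight j)
    (h₂ : ∀ i, (x.moveLeft i).Numeric) (h₃ : ∀ j, (x.moveRight j).Numeric) : x.Numeric := by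
  cases x; exact ⟨h₁, h₂, h₃⟩

theorem Numeric.left_lt_right {x : PGame.{u}} (o : Numeric x) (i : x.LeftMoves)
    (j : x.RightMoves) : x.moveLeft i < x.moveRight j := by
  cases x; exact o.1 i j

theorem Numeric.moveLeft {x : PGame.{u}} (o : Numeric x) (i : x.LeftMoves) :
    Numeric (x.moveLeft i) := by
  cases x; exact o.2.1 i

theorem Numeric.moveRight {x : PGame.{u}} (o : Numeric x) (j : x.RightMoves) :
    Numeric (x.moveRight j) := by
  cases x; exact o.2.2 j

theorem lf_asymm_of_numeric (x : PGame.{u}) :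
    ∀ y : PGame.{u}, x.Numeric → y.Numeric → x ⧏ y → ¬ y ⧏ x := by
  induction x with
  | mk xl xr xL xR ihxl ihxr =>
  intro y ox oy h₁ h₂
  cases y with
  | mk yl yr yL yR =>
  rcases lf_iff_exists_le.1 h₁ with ⟨i, h₁⟩ | ⟨j, h₁⟩ <;>
    rcases lf_iff_exists_le.1 h₂ with ⟨i', h₂⟩ | ⟨j', h₂⟩
  · exact ihxl i' (yL i) (ox.moveLeft i') (oy.moveLeft i) (moveLeft_lf_of_le h₁ i')
      (moveLeft_lf_of_le h₂ i)
  · exact (oy.left_lt_right i j').2 (h₂.trans h₁)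
  · exact (ox.left_lt_right i' j).2 (h₁.trans h₂)
  · exact ihxr j (yR j') (ox.moveRight j) (oy.moveRight j') (lf_moveRight_of_le h₁ j')
      (lf_moveRight_of_le h₂ j)

theorem Numeric.le_of_lf {x y : PGame.{u}} (ox : x.Numeric) (oy : y.Numeric) (h : x ⧏ y) :
    x ≤ y :=
  not_lf.1 (lf_asymm_of_numeric x y ox oy h)

theorem Numeric.lt_of_lf {x y : PGame.{u}} (ox : x.Numeric) (oy : y.Numeric) (h : x ⧏ y) :
    x < y :=
  ⟨ox.le_of_lf oy h, not_le.2 h⟩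

theorem Numeric.le_total {x y : PGame.{u}} (ox : x.Numeric) (oy : y.Numeric) : x ≤ y ∨ y ≤ x :=
  (em (x ≤ y)).imp_right fun h => oy.le_of_lf ox (not_le.1 h)

theorem Numeric.le_of_not_lt {x y : PGame.{u}} (ox : x.Numeric) (oy : y.Numeric)
    (h : ¬ x < y) : y ≤ x := by
  by_contra hyx
  exact h ⟨(ox.le_total oy).resolve_right hyx, hyx⟩

theorem Numeric.moveLeft_lt {x : PGame.{u}} (o : x.Numeric) (i : x.LeftMoves) :
    x.moveLeft i < x :=
  (o.moveLeft i).lt_of_lf o (moveLeft_lf i)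

theorem Numeric.lt_moveRight {x : PGame.{u}} (o : x.Numeric) (j : x.RightMoves) :
    x < x.moveRight j :=
  o.lt_of_lf (o.moveRight j) (lf_moveRight j)

theorem Numeric.exists_between {x y : PGame.{u}} (ox : x.Numeric) (oy : y.Numeric) (h : x < y) :
    ∃ z : PGame.{u}, z.Numeric ∧ x < z ∧ z < y :=
  have oz : (PGame.mk PUnit PUnit (fun _ => x) fun _ => y).Numeric :=
    ⟨fun _ _ => h, fun _ => ox, fun _ => oy⟩
  ⟨_, oz, oz.moveLeft_lt PUnit.unit, oz.lt_moveRight PUnit.unit⟩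

end Numeric

section Add

theorem add_lf_of_moveRight_add_le {x y z : PGame.{u}} (j : x.RightMoves)
    (h : x.moveRight j + y ≤ z) : x + y ⧏ z := by
  cases x; cases y; exact lf_of_moveRight_le (j := Sum.inl j) h

theorem add_lf_of_add_moveRight_le {x y z : PGame.{u}} (j : y.RightMoves)
    (h : x + y.moveRight j ≤ z) : x + y ⧏ z := by
  cases x; cases y; exact lf_of_moveRight_le (j := Sum.inr j) h

theorem lf_add_of_le_moveLeft_add {x y z : PGame.{u}} (i : x.LeftMoves)
    (h : z ≤ x.moveLeft i + y) : z ⧏ x + y := by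
  cases x; cases y; exact lf_of_le_moveLeft (i := Sum.inl i) h

theorem lf_add_of_le_add_moveLeft {x y z : PGame.{u}} (i : y.LeftMoves)
    (h : z ≤ x + y.moveLeft i) : z ⧏ x + y := by
  cases x; cases y; exact lf_of_le_moveLeft (i := Sum.inr i) h

theorem add_le_of_forall_lf {x y z : PGame.{u}} (h₁ : ∀ i, x.moveLeft i + y ⧏ z)
    (h₂ : ∀ i, x + y.moveLeft i ⧏ z) (h₃ : ∀ j, x + y ⧏ z.moveRight j) : x + y ≤ z := by
  cases x; cases y
  exact le_iff_forall_lf.2 ⟨fun | .inl i => h₁ i | .inr i => h₂ i, h₃⟩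

theorem le_add_of_forall_lf {x y z : PGame.{u}} (h₁ : ∀ i, z.moveLeft i ⧏ x + y)
    (h₂ : ∀ j, z ⧏ x.moveRight j + y) (h₃ : ∀ j, z ⧏ x + y.moveRight j) : z ≤ x + y := by
  cases x; cases y
  exact le_iff_forall_lf.2 ⟨h₁, fun | .inl j => h₂ j | .inr j => h₃ j⟩

theorem add_comm_le (x y : PGame.{u}) : x + y ≤ y + x := by
  induction x generalizing y with
  | mk xl xr xL xR ihxl ihxr =>
  induction y with
  | mk yl yr yL yR ihyl ihyr =>
  refine le_of_forall ?_ ?_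
  · rintro (i | i)
    exacts [⟨Sum.inr i, ihxl i _⟩, ⟨Sum.inl i, ihyl i⟩]
  · rintro (j | j)
    exacts [⟨Sum.inr j, ihyr j⟩, ⟨Sum.inl j, ihxr j _⟩]

theorem zero_add_equiv (x : PGame.{u}) : 0 + x ≈ x := by
  induction x with
  | mk xl xr xL xR ihl ihr =>
  constructor
  · refine le_of_forall ?_ fun j => ⟨Sum.inr j, (ihr j).1⟩
    rintro (i | i)
    exacts [i.elim, ⟨i, (ihl i).1⟩]
  · refine le_of_forall (fun i => ⟨Sum.inr i, (ihl i).2⟩) ?_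
    rintro (j | j)
    exacts [j.elim, ⟨j, (ihr j).2⟩]

theorem add_assoc_equiv (x y z : PGame.{u}) : x + y + z ≈ x + (y + z) := by
  induction x generalizing y z with
  | mk xl xr xL xR ihx₁ ihx₂ =>
  induction y generalizing z with
  | mk yl yr yL yR ihy₁ ihy₂ =>
  induction z with
  | mk zl zr zL zR ihz₁ ihz₂ =>
  constructor
  · refine le_of_forall ?_ ?_
    · rintro ((i | i) | i)
      exacts [⟨Sum.inl i, (ihx₁ i _ _).1⟩, ⟨Sum.inr (Sum.inl i), (ihy₁ i _).1⟩,
        ⟨Sum.inr (Sum.inr i), (ihz₁ i).1⟩]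
    · rintro (j | j | j)
      exacts [⟨Sum.inl (Sum.inl j), (ihx₂ j _ _).1⟩, ⟨Sum.inl (Sum.inr j), (ihy₂ j _).1⟩,
        ⟨Sum.inr j, (ihz₂ j).1⟩]
  · refine le_of_forall ?_ ?_
    · rintro (i | i | i)
      exacts [⟨Sum.inl (Sum.inl i), (ihx₁ i (mk yl yr yL yR) (mk zl zr zL zR)).2⟩,
        ⟨Sum.inl (Sum.inr i), (ihy₁ i _).2⟩, ⟨Sum.inr i, (ihz₁ i).2⟩]
    · rintro ((j | j) | j)
      exacts [⟨Sum.inl j, (ihx₂ j (mk yl yr yL yR) (mk zl zr zL zR)).2⟩,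
        ⟨Sum.inr (Sum.inl j), (ihy₂ j _).2⟩, ⟨Sum.inr (Sum.inr j), (ihz₂ j).2⟩]

theorem neg_add_equiv (x : PGame.{u}) : -x + x ≈ 0 := by
  induction x with
  | mk xl xr xL xR ihl ihr =>
  refine ⟨le_iff_forall_lf.2 ⟨?_, fun j => j.elim⟩, le_iff_forall_lf.2 ⟨fun i => i.elim, ?_⟩⟩
  · rintro (i | i)
    · exact add_lf_of_add_moveRight_le (x := -xR i) (y := mk xl xr xL xR) i (ihr i).1
    · exact add_lf_of_moveRight_add_le (x := -mk xl xr xL xR) i (ihl i).1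
  · rintro (j | j)
    · exact lf_add_of_le_add_moveLeft (x := -xL j) (y := mk xl xr xL xR) j (ihl j).2
    · exact lf_add_of_le_moveLeft_add (x := -mk xl xr xL xR) j (ihr j).2

theorem neg_le_neg_and_neg_lf_neg (x y : PGame.{u}) :
    (x ≤ y → -y ≤ -x) ∧ (x ⧏ y → -y ⧏ -x) := by
  induction x generalizing y with
  | mk xl xr xL xR ihxl ihxr =>
  induction y with
  | mk yl yr yL yR ihyl ihyr =>
  refine ⟨fun h => le_iff_forall_lf.2 ⟨fun j => ?_, fun i => ?_⟩, fun h => ?_⟩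
  · exact (ihyr j).2 (lf_moveRight_of_le h j)
  · exact (ihxl i _).2 (moveLeft_lf_of_le h i)
  · rcases lf_iff_exists_le.1 h with ⟨i, h⟩ | ⟨j, h⟩
    · exact lf_of_moveRight_le (x := -(mk yl yr yL yR)) (j := i) ((ihyl i).1 h)
    · exact lf_of_le_moveLeft (y := -(mk xl xr xL xR)) (i := j) ((ihxr j _).1 h)

theorem neg_le_neg {x y : PGame.{u}} (h : x ≤ y) : -y ≤ -x :=
  (neg_le_neg_and_neg_lf_neg x y).1 h

theorem neg_lt_neg {x y : PGame.{u}} (h : x < y) : -y < -x :=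
  ⟨neg_le_neg h.1, not_le.2 ((neg_le_neg_and_neg_lf_neg x y).2 (not_le.1 h.2))⟩

theorem add_le_add_left_and_add_lf_add_left (x y z : PGame.{u}) :
    (y ≤ z → x + y ≤ x + z) ∧ (y ⧏ z → x + y ⧏ x + z) := by
  induction x generalizing y z with
  | mk xl xr xL xR ihx₁ ihx₂ =>
  induction y generalizing z with
  | mk yl yr yL yR ihy₁ ihy₂ =>
  induction z with
  | mk zl zr zL zR ihz₁ ihz₂ =>
  refine ⟨fun h => le_iff_forall_lf.2 ⟨?_, ?_⟩, fun h => ?_⟩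
  · rintro (i | i)
    · exact lf_of_le_moveLeft (i := Sum.inl i) ((ihx₁ i _ _).1 h)
    · exact (ihy₁ i _).2 (moveLeft_lf_of_le h i)
  · rintro (j | j)
    · exact lf_of_moveRight_le (j := Sum.inl j) ((ihx₂ j _ _).1 h)
    · exact (ihz₂ j).2 (lf_moveRight_of_le h j)
  · rcases lf_iff_exists_le.1 h with ⟨i, h⟩ | ⟨j, h⟩
    · exact lf_of_le_moveLeft (i := Sum.inr i) ((ihz₁ i).1 h)
    · exact lf_of_moveRight_le (j := Sum.inr j) ((ihy₂ j _).1 h)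

theorem add_le_add_left {x y : PGame.{u}} (h : x ≤ y) (z : PGame.{u}) : z + x ≤ z + y :=
  (add_le_add_left_and_add_lf_add_left z x y).1 h

theorem add_le_add_right {x y : PGame.{u}} (h : x ≤ y) (z : PGame.{u}) : x + z ≤ y + z :=
  (add_comm_le x z).trans ((add_le_add_left h z).trans (add_comm_le z y))

theorem add_congr {w x y z : PGame.{u}} (h₁ : w ≈ x) (h₂ : y ≈ z) : w + y ≈ x + z :=
  ⟨(add_le_add_right h₁.1 y).trans (add_le_add_left h₂.1 x),
    (add_le_add_right h₁.2 z).trans (add_le_add_left h₂.2 w)⟩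

theorem neg_congr {x y : PGame.{u}} (h : x ≈ y) : -x ≈ -y :=
  ⟨neg_le_neg h.2, neg_le_neg h.1⟩

end Add

end PGame

/-- A `def` rather than an `abbrev`, so that Mathlib's order on arbitrary quotients stays out of
the way. -/
def Game : Type (u + 1) := Quotient PGame.setoid.{u}

namespace Game

open PGame

noncomputable def mk (x : PGame.{u}) : Game.{u} := Quotient.mk _ x

noncomputable instance : LE Game.{u} :=
  ⟨Quotient.lift₂ (· ≤ ·) fun _ _ _ _ ha hb =>
    propext ⟨fun h => (ha.2.trans h).trans hb.1, fun h => (ha.1.trans h).trans hb.2⟩⟩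

noncomputable instance : PartialOrder Game.{u} where
  lt a b := a ≤ b ∧ ¬ b ≤ a
  le_refl := by rintro ⟨x⟩; exact le_refl x
  le_trans := by rintro ⟨x⟩ ⟨y⟩ ⟨z⟩; exact le_trans (α := PGame)
  lt_iff_le_not_ge _ _ := Iff.rfl
  le_antisymm := by rintro ⟨x⟩ ⟨y⟩ h₁ h₂; exact Quot.sound ⟨h₁, h₂⟩

noncomputable instance : Zero Game.{u} := ⟨mk 0⟩

noncomputable instance : Add Game.{u} :=
  ⟨Quotient.map₂ (· + ·) fun _ _ h₁ _ _ h₂ => add_congr h₁ h₂⟩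

noncomputable instance : Neg Game.{u} := ⟨Quotient.map (-·) fun _ _ => neg_congr⟩

noncomputable instance : AddCommGroup Game.{u} where
  add_assoc := by rintro ⟨x⟩ ⟨y⟩ ⟨z⟩; exact Quot.sound (add_assoc_equiv x y z)
  zero_add := by rintro ⟨x⟩; exact Quot.sound (zero_add_equiv x)
  add_zero := by
    rintro ⟨x⟩
    exact Quot.sound (Setoid.trans ⟨add_comm_le x 0, add_comm_le 0 x⟩ (zero_add_equiv x))
  nsmul := nsmulRec
  zsmul := zsmulRec
  neg_add_cancel := by rintro ⟨x⟩; exact Quot.sound (neg_add_equiv x)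
  add_comm := by rintro ⟨x⟩ ⟨y⟩; exact Quot.sound ⟨add_comm_le x y, add_comm_le y x⟩

instance : IsOrderedAddMonoid Game.{u} where
  add_le_add_left := by rintro ⟨x⟩ ⟨y⟩ h ⟨z⟩; exact PGame.add_le_add_right (x := x) (y := y) h z

theorem mk_le_mk {x y : PGame.{u}} : mk x ≤ mk y ↔ x ≤ y := Iff.rfl

theorem mk_lt_mk {x y : PGame.{u}} : mk x < mk y ↔ x < y := Iff.rfl

theorem mk_add (x y : PGame.{u}) : mk (x + y) = mk x + mk y := rfl

theorem mk_neg (x : PGame.{u}) : mk (-x) = -mk x := rfl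

end Game

namespace PGame

protected theorem add_lt_add_of_lt_of_le {a b c d : PGame.{u}} (h₁ : a < b) (h₂ : c ≤ d) :
    a + c < b + d :=
  Game.mk_lt_mk.1 (add_lt_add_of_lt_of_le (Game.mk_lt_mk.2 h₁) (Game.mk_le_mk.2 h₂))

protected theorem add_lt_add_of_le_of_lt {a b c d : PGame.{u}} (h₁ : a ≤ b) (h₂ : c < d) :
    a + c < b + d :=
  Game.mk_lt_mk.1 (add_lt_add_of_le_of_lt (Game.mk_le_mk.2 h₁) (Game.mk_lt_mk.2 h₂))

theorem Numeric.neg {x : PGame.{u}} (o : x.Numeric) : (-x).Numeric := by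
  induction x with
  | mk xl xr xL xR ihl ihr =>
  obtain ⟨h₁, h₂, h₃⟩ := o
  exact Numeric.mk (fun j i => neg_lt_neg (h₁ i j)) (fun j => ihr j (h₃ j)) fun i => ihl i (h₂ i)

theorem Numeric.add {x y : PGame.{u}} (ox : x.Numeric) (oy : y.Numeric) : (x + y).Numeric := by
  induction x generalizing y with
  | mk xl xr xL xR ihxl ihxr =>
  induction y with
  | mk yl yr yL yR ihyl ihyr =>
  refine Numeric.mk ?_ ?_ ?_
  · rintro (i | i) (j | j)
    · exact PGame.add_lt_add_of_lt_of_le (ox.left_lt_right i j) le_rfl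
    · exact PGame.add_lt_add_of_lt_of_le (ox.moveLeft_lt i) (oy.lt_moveRight j).le
    · exact PGame.add_lt_add_of_lt_of_le (ox.lt_moveRight j) (oy.moveLeft_lt i).le
    · exact PGame.add_lt_add_of_le_of_lt (le_refl (PGame.mk xl xr xL xR)) (oy.left_lt_right i j)
  · rintro (i | i)
    exacts [ihxl i (ox.moveLeft i) oy, ihyl i (oy.moveLeft i)]
  · rintro (j | j)
    exacts [ihxr j (ox.moveRight j) oy, ihyr j (oy.moveRight j)]

theorem exists_forall_le_of_numeric {ι : Type*} [Fintype ι] [Nonempty ι] {f : ι → PGame.{u}}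
    (hf : ∀ i, (f i).Numeric) : ∃ i, ∀ j, f j ≤ f i := by
  obtain ⟨i, -, hi⟩ := Finset.exists_maximalFor f Finset.univ Finset.univ_nonempty
  exact ⟨i, fun j => ((hf j).le_total (hf i)).elim id (hi (Finset.mem_univ j))⟩

theorem exists_forall_ge_of_numeric {ι : Type*} [Fintype ι] [Nonempty ι] {f : ι → PGame.{u}}
    (hf : ∀ i, (f i).Numeric) : ∃ i, ∀ j, f i ≤ f j := by
  obtain ⟨i, -, hi⟩ := Finset.exists_minimalFor f Finset.univ Finset.univ_nonempty
  exact ⟨i, fun j => ((hf i).le_total (hf j)).elim id (hi (Finset.mem_univ j))⟩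

section Stops

/-- The left stop `L(G)`, given by its characteristic property rather than by the recursion
`L(G) = max R(G^L)`; as the numbers are dense, it determines `ℓ` up to `≈`. -/
structure IsLeftStop (G ℓ : PGame.{u}) : Prop where
  numeric : ℓ.Numeric
  le_of_lt : ∀ y : PGame.{u}, y.Numeric → ℓ < y → G ≤ y
  lf_of_lt : ∀ y : PGame.{u}, y.Numeric → y < ℓ → y ⧏ G

structure IsRightStop (G r : PGame.{u}) : Prop where
  numeric : r.Numeric
  le_of_lt : ∀ y : PGame.{u}, y.Numeric → y < r → y ≤ G
  lf_of_lt : ∀ y : PGame.{u}, y.Numeric → r < y → G ⧏ y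

theorem isLeftStop_of_equiv {G z : PGame.{u}} (hz : z.Numeric) (h : G ≈ z) : IsLeftStop G z :=
  ⟨hz, fun _ _ hy => h.1.trans hy.le, fun _ _ hy => lf_of_lt (hy.trans_le h.2)⟩

theorem isRightStop_of_equiv {G z : PGame.{u}} (hz : z.Numeric) (h : G ≈ z) : IsRightStop G z :=
  ⟨hz, fun _ _ hy => hy.le.trans h.2, fun _ _ hy => lf_of_lt (h.1.trans_lt hy)⟩

theorem IsLeftStop.add_le_add {G ℓ a c : PGame.{u}} (hG : IsLeftStop G ℓ) (ha : a.Numeric)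
    (hc : c.Numeric) (hac : a < c) : G + a ≤ ℓ + c := by
  have hlt : ℓ < ℓ + c + -a := by
    rw [← Game.mk_lt_mk, Game.mk_add, Game.mk_add, Game.mk_neg, lt_add_neg_iff_add_lt]
    exact add_lt_add_of_le_of_lt le_rfl (Game.mk_lt_mk.2 hac)
  have hle := Game.mk_le_mk.2 (hG.le_of_lt _ ((hG.numeric.add hc).add ha.neg) hlt)
  rw [Game.mk_add, Game.mk_add, Game.mk_neg, le_add_neg_iff_add_le] at hle
  rwa [← Game.mk_le_mk, Game.mk_add, Game.mk_add]

theorem IsRightStop.add_le_add {G r c b : PGame.{u}} (hG : IsRightStop G r) (hc : c.Numeric)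
    (hb : b.Numeric) (hcb : c < b) : r + c ≤ G + b := by
  have hlt : r + c + -b < r := by
    rw [← Game.mk_lt_mk, Game.mk_add, Game.mk_add, Game.mk_neg, add_neg_lt_iff_lt_add]
    exact add_lt_add_of_le_of_lt le_rfl (Game.mk_lt_mk.2 hcb)
  have hle := Game.mk_le_mk.2 (hG.le_of_lt _ ((hG.numeric.add hc).add hb.neg) hlt)
  rw [Game.mk_add, Game.mk_add, Game.mk_neg, add_neg_le_iff_le_add] at hle
  rwa [← Game.mk_le_mk, Game.mk_add, Game.mk_add]

variable {G : PGame.{u}} {r : G.LeftMoves → PGame.{u}} {ℓ : G.RightMoves → PGame.{u}}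

/-- `G` is then equal to some `r i`, to some `ℓ j`, or to the number `{r | ℓ}`. -/
theorem exists_numeric_equiv_of_rightStop_lt_leftStop
    (hr : ∀ i, IsRightStop (G.moveLeft i) (r i)) (hℓ : ∀ j, IsLeftStop (G.moveRight j) (ℓ j))
    (h : ∀ i j, r i < ℓ j) : ∃ z : PGame.{u}, z.Numeric ∧ G ≈ z := by
  by_cases hL : ∃ i, G ≤ r i
  · obtain ⟨i, hi⟩ := hL
    have hri := (hr i).numeric
    refine ⟨r i, hri, hi, le_iff_forall_lf.2 ⟨fun k => ?_, fun j => (hℓ j).lf_of_lt _ hri (h i j)⟩⟩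
    exact lf_of_le_moveLeft ((hr i).le_of_lt _ (hri.moveLeft k) (hri.moveLeft_lt k))
  by_cases hR : ∃ j, ℓ j ≤ G
  · obtain ⟨j, hj⟩ := hR
    have hℓj := (hℓ j).numeric
    refine ⟨ℓ j, hℓj, le_iff_forall_lf.2 ⟨fun i => (hr i).lf_of_lt _ hℓj (h i j), fun k => ?_⟩, hj⟩
    exact lf_of_moveRight_le ((hℓ j).le_of_lt _ (hℓj.moveRight k) (hℓj.lt_moveRight k))
  simp only [not_exists, PGame.not_le] at hL hR
  have hz : (mk G.LeftMoves G.RightMoves r ℓ).Numeric :=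
    Numeric.mk h (fun i => (hr i).numeric) fun j => (hℓ j).numeric
  refine ⟨_, hz, le_iff_forall_lf.2 ⟨fun i => ?_, hR⟩,
    le_iff_forall_lf.2 ⟨hL, fun j => ?_⟩⟩
  · exact (hr i).lf_of_lt _ hz (hz.moveLeft_lt i)
  · exact (hℓ j).lf_of_lt _ hz (hz.lt_moveRight j)

theorem isLeftStop_of_forall_le (hr : ∀ i, IsRightStop (G.moveLeft i) (r i)) {i₀ : G.LeftMoves}
    (hi₀ : ∀ i, r i ≤ r i₀) {j₀ : G.RightMoves} {ℓ₀ : PGame.{u}}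
    (hℓ₀ : IsLeftStop (G.moveRight j₀) ℓ₀) (hle : ℓ₀ ≤ r i₀) : IsLeftStop G (r i₀) where
  numeric := (hr i₀).numeric
  le_of_lt y hy h := le_iff_forall_lf.2 ⟨fun i => (hr i).lf_of_lt y hy ((hi₀ i).trans_lt h),
    fun k => lf_of_moveRight_le (j := j₀) (hℓ₀.le_of_lt _ (hy.moveRight k)
      ((hle.trans_lt h).trans (hy.lt_moveRight k)))⟩
  lf_of_lt y hy h := lf_of_le_moveLeft ((hr i₀).le_of_lt y hy h)

theorem isRightStop_of_forall_ge (hℓ : ∀ j, IsLeftStop (G.moveRight j) (ℓ j)) {j₀ : G.RightMoves}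
    (hj₀ : ∀ j, ℓ j₀ ≤ ℓ j) {i₀ : G.LeftMoves} {r₀ : PGame.{u}}
    (hr₀ : IsRightStop (G.moveLeft i₀) r₀) (hle : ℓ j₀ ≤ r₀) : IsRightStop G (ℓ j₀) where
  numeric := (hℓ j₀).numeric
  le_of_lt y hy h := le_iff_forall_lf.2 ⟨fun k => lf_of_le_moveLeft (i := i₀) (hr₀.le_of_lt _
      (hy.moveLeft k) ((hy.moveLeft_lt k).trans (h.trans_le hle))),
    fun j => (hℓ j).lf_of_lt y hy (h.trans_le (hj₀ j))⟩
  lf_of_lt y hy h := lf_of_moveRight_le ((hℓ j₀).le_of_lt y hy h)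

theorem exists_stops_of_not_forall_lt [Fintype G.LeftMoves] [Fintype G.RightMoves]
    (hr : ∀ i, IsRightStop (G.moveLeft i) (r i)) (hℓ : ∀ j, IsLeftStop (G.moveRight j) (ℓ j))
    (h : ¬ ∀ i j, r i < ℓ j) : ∃ i j, IsLeftStop G (r i) ∧ IsRightStop G (ℓ j) := by
  simp only [not_forall] at h
  obtain ⟨i, j, hij⟩ := h
  have : Nonempty G.LeftMoves := ⟨i⟩
  have : Nonempty G.RightMoves := ⟨j⟩
  obtain ⟨i₀, hi₀⟩ := exists_forall_le_of_numeric fun i => (hr i).numeric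
  obtain ⟨j₀, hj₀⟩ := exists_forall_ge_of_numeric fun j => (hℓ j).numeric
  have hle : ℓ j₀ ≤ r i₀ :=
    (hj₀ j).trans (((hr i).numeric.le_of_not_lt (hℓ j).numeric hij).trans (hi₀ i))
  exact ⟨i₀, j₀, isLeftStop_of_forall_le hr hi₀ (hℓ j₀) hle,
    isRightStop_of_forall_ge hℓ hj₀ (hr i₀) hle⟩

end Stops

theorem exists_isLeftStop_isRightStop :
    ∀ (G : PGame.{u}) [G.Short], ∃ ℓ r, IsLeftStop G ℓ ∧ IsRightStop G r := by
  intro G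
  induction G with
  | mk α β L R ihL ihR =>
  intro _
  choose ℓL rL hℓL hrL using fun i => @ihL i (moveLeftShort (mk α β L R) i)
  choose ℓR rR hℓR hrR using fun j => @ihR j (moveRightShort (mk α β L R) j)
  by_cases h : ∀ i j, rL i < ℓR j
  · obtain ⟨z, hz, hGz⟩ :=
      exists_numeric_equiv_of_rightStop_lt_leftStop (G := mk α β L R) hrL hℓR h
    exact ⟨z, z, isLeftStop_of_equiv hz hGz, isRightStop_of_equiv hz hGz⟩
  · obtain ⟨i, j, hi, hj⟩ := exists_stops_of_not_forall_lt (G := mk α β L R) hrL hℓR h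
    exact ⟨_, _, hi, hj⟩

theorem exists_stops_of_forall_not_equiv (G : PGame.{u}) [G.Short]
    (hG : ∀ z : PGame.{u}, z.Numeric → ¬ G ≈ z) :
    (∃ i ℓ, IsLeftStop G ℓ ∧ IsRightStop (G.moveLeft i) ℓ) ∧
      ∃ j r, IsRightStop G r ∧ IsLeftStop (G.moveRight j) r := by
  choose ℓL rL hℓL hrL using fun i => exists_isLeftStop_isRightStop (G.moveLeft i)
  choose ℓR rR hℓR hrR using fun j => exists_isLeftStop_isRightStop (G.moveRight j)
  have h : ¬ ∀ i j, rL i < ℓR j := fun h =>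
    let ⟨z, hz, hGz⟩ := exists_numeric_equiv_of_rightStop_lt_leftStop hrL hℓR h
    hG z hz hGz
  obtain ⟨i, j, hi, hj⟩ := exists_stops_of_not_forall_lt hrL hℓR h
  exact ⟨⟨i, _, hi, hrL i⟩, j, _, hj, hℓR j⟩

theorem exists_add_le_moveLeft_add (G : PGame.{u}) [G.Short]
    (hG : ∀ z : PGame.{u}, z.Numeric → ¬ G ≈ z) {a b : PGame.{u}} (ha : a.Numeric)
    (hb : b.Numeric) (hab : a < b) : ∃ i, G + a ≤ G.moveLeft i + b := by
  obtain ⟨i, ℓ, hGℓ, hiℓ⟩ := (exists_stops_of_forall_not_equiv G hG).1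
  obtain ⟨c, hc, hac, hcb⟩ := ha.exists_between hb hab
  exact ⟨i, (hGℓ.add_le_add ha hc hac).trans (hiℓ.add_le_add hc hb hcb)⟩

theorem exists_moveRight_add_le_add (G : PGame.{u}) [G.Short]
    (hG : ∀ z : PGame.{u}, z.Numeric → ¬ G ≈ z) {a b : PGame.{u}} (ha : a.Numeric)
    (hb : b.Numeric) (hab : a < b) : ∃ j, G.moveRight j + a ≤ G + b := by
  obtain ⟨j, r, hGr, hjr⟩ := (exists_stops_of_forall_not_equiv G hG).2
  obtain ⟨c, hc, hac, hcb⟩ := ha.exists_between hb hab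
  exact ⟨j, (hjr.add_le_add ha hc hac).trans (hGr.add_le_add hc hb hcb)⟩

end PGame

end SetTheory

/-- Strong Number Avoidance Theorem: if `G` is a short game not equivalent to any
number and `x` is a number, then `G + x` is equivalent to the game whose left
options are the `G^L + x` and whose right options are the `G^R + x`. -/
theorem strong_number_avoidance (G : PGame) [G.Short]
    (hG : ∀ y : PGame, y.Numeric → ¬ (G ≈ y))
    (x : PGame) (hx : x.Numeric) :
    G + x ≈ PGame.mk G.LeftMoves G.RightMoves
      (fun i => G.moveLeft i + x) (fun j => G.moveRight j + x) := by
  constructor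
  · refine add_le_of_forall_lf (fun i => lf_of_le_moveLeft (i := i) le_rfl) (fun k => ?_)
      fun j => add_lf_of_moveRight_add_le j le_rfl
    obtain ⟨i, hi⟩ := exists_add_le_moveLeft_add G hG (hx.moveLeft k) hx (hx.moveLeft_lt k)
    exact lf_of_le_moveLeft (i := i) hi
  · refine le_add_of_forall_lf (fun i => lf_add_of_le_moveLeft_add i le_rfl)
      (fun j => lf_of_moveRight_le (j := j) le_rfl) fun k => ?_
    obtain ⟨j, hj⟩ := exists_moveRight_add_le_add G hG hx (hx.moveRight k) (hx.lt_moveRight k)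
    exact lf_of_moveRight_le (j := j) hj
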